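/- arXiv:2409.14102 — 4 statements merged into one kernel-verified Lean document; each statement's English description precedes it below -/
import Mathlib

section
/- (Lemma 2.1, inequality (2.3.3), whole-space case.) Let l > 0 be noninteger. There is a constant C = C(N, l, p) > 0 such that for every bounded continuous function u : ℝ^N × ℝ → ℝ with ⟨u⟩^{(l)} < ∞ and M_p(u) < ∞, one has sup_{x ∈ ℝ^N, t ≥ 0} |u(x,t)| ≤ C (⟨u⟩^{(l)})^σ (M_p(u))^{1-σ}, where σ = N/(lp+N). -/
open MeasureTheory Finset ENNReal

/-- Parabolic norm of an increment `H = (h, τ)`: `‖h‖ + |τ|^(1/2)`. -/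
noncomputable def pnormH {N : ℕ} (h : EuclideanSpace ℝ (Fin N)) (τ : ℝ) : ℝ :=
  ‖h‖ + |τ| ^ ((1 : ℝ) / 2)

/-- `k`-th finite difference of `u` along `H = (h, τ)` at `(x, t)`. -/
noncomputable def fdiffP {N : ℕ} (u : EuclideanSpace ℝ (Fin N) × ℝ → ℝ) (k : ℕ)
    (h : EuclideanSpace ℝ (Fin N)) (τ : ℝ) (x : EuclideanSpace ℝ (Fin N)) (t : ℝ) : ℝ :=
  ∑ i ∈ Finset.range (k + 1),
    (-1 : ℝ) ^ (k - i) * (k.choose i : ℝ) * u (x + (i : ℝ) • h, t + (i : ℝ) * τ)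

/-- Parabolic Hölder seminorm `⟨u⟩^{(l)}` on `ℝ^N × [0, ∞)`, with `k`-th differences. -/
noncomputable def semiP {N : ℕ} (u : EuclideanSpace ℝ (Fin N) × ℝ → ℝ) (l : ℝ) (k : ℕ) :
    ℝ≥0∞ :=
  ⨆ (x : EuclideanSpace ℝ (Fin N)) (t : ℝ) (_ : 0 ≤ t)
    (h : EuclideanSpace ℝ (Fin N)) (τ : ℝ) (_ : 0 ≤ τ) (_ : ¬(h = 0 ∧ τ = 0)),
    ENNReal.ofReal (|fdiffP u k h τ x t| / pnormH h τ ^ l)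

/-- `L^p` norm of `u` on `ℝ^N × (0, ∞)`. -/
noncomputable def lpP {N : ℕ} (u : EuclideanSpace ℝ (Fin N) × ℝ → ℝ) (p : ℝ) : ℝ≥0∞ :=
  (∫⁻ z in {z : EuclideanSpace ℝ (Fin N) × ℝ | 0 < z.2},
    ENNReal.ofReal (|u z| ^ p)) ^ (1 / p)

/-- `M_p(u) = sup_{t ≥ 0} ‖u(·, t)‖_{L^p(ℝ^N)}`. -/
noncomputable def mpP {N : ℕ} (u : EuclideanSpace ℝ (Fin N) × ℝ → ℝ) (p : ℝ) : ℝ≥0∞ :=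
  ⨆ (t : ℝ) (_ : 0 ≤ t),
    (∫⁻ x : EuclideanSpace ℝ (Fin N), ENNReal.ofReal (|u (x, t)| ^ p)) ^ (1 / p)

/-- Parabolic Hölder norm `|u|^{(l)} = sup |u| + ⟨u⟩^{(l)}` with `k = ⌊l⌋ + 1`. -/
noncomputable def normP {N : ℕ} (u : EuclideanSpace ℝ (Fin N) × ℝ → ℝ) (l : ℝ) : ℝ≥0∞ :=
  (⨆ (x : EuclideanSpace ℝ (Fin N)) (t : ℝ) (_ : 0 ≤ t), ENNReal.ofReal |u (x, t)|) +
    semiP u l (⌊l⌋₊ + 1)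

/-!
Fix `(x, t)` and a radius `r > 0`. By Chebyshev, `{y | λ ≤ |u(y, t)|}` has measure at most
`M^p / λ^p`; for `λ` slightly above `(k / |B₁|)^(1/p) M r^(-N/p)` the `k` dilated copies
`{h | x + i h ∈ {λ ≤ |u(·, t)|}}`, `1 ≤ i ≤ k`, each of measure at most that of the set itself,
cannot cover the ball `B_r`. For an `h ∈ B_r` outside all of them, solving the `k`-th difference
along `(h, 0)` for its `i = 0` term gives `|u(x, t)| ≤ ⟨u⟩ r^l + 2^k λ`. Balancing the two terms
`⟨u⟩ r^l` and `M r^(-N/p)` in `r` produces the exponent `σ = N / (lp + N)`.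
-/

section Shift

variable {E : Type*} [NormedAddCommGroup E] [NormedSpace ℝ E] [MeasurableSpace E] [BorelSpace E]
  [FiniteDimensional ℝ E] (μ : Measure E) [μ.IsAddHaarMeasure]

lemma measure_setOf_add_smul_mem_le (x : E) {c : ℝ} (hc : 1 ≤ |c|) (T : Set E) :
    μ {h | x + c • h ∈ T} ≤ μ T := by
  have hc0 : c ≠ 0 := by rintro rfl; norm_num at hc
  change μ ((c • ·) ⁻¹' ((x + ·) ⁻¹' T)) ≤ μ T
  rw [Measure.addHaar_preimage_smul μ hc0, measure_preimage_add]
  refine mul_le_of_le_one_left' (ENNReal.ofReal_le_one.mpr ?_)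
  rw [abs_inv, abs_pow]
  exact inv_le_one_of_one_le₀ (one_le_pow₀ hc)

lemma exists_mem_ball_forall_add_smul_notMem (x : E) {T : Set E} {k : ℕ} {r : ℝ}
    (hT : k * μ T < μ (Metric.ball 0 r)) :
    ∃ h ∈ Metric.ball (0 : E) r, ∀ i ∈ Finset.Icc 1 k, x + (i : ℝ) • h ∉ T := by
  have hcover : μ (⋃ i ∈ Finset.Icc 1 k, {h | x + (i : ℝ) • h ∈ T}) < μ (Metric.ball 0 r) :=
    calc _ ≤ ∑ i ∈ Finset.Icc 1 k, μ {h | x + (i : ℝ) • h ∈ T} := measure_biUnion_finset_le _ _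
      _ ≤ ∑ _i ∈ Finset.Icc 1 k, μ T := Finset.sum_le_sum fun i hi =>
          measure_setOf_add_smul_mem_le μ x (by simpa using (Finset.mem_Icc.mp hi).1) T
      _ = k * μ T := by simp
      _ < _ := hT
  obtain ⟨h, hball, hgood⟩ := Set.not_subset.mp fun hsub => (measure_mono hsub).not_gt hcover
  exact ⟨h, hball, fun i hi hmem => hgood (Set.mem_biUnion hi hmem)⟩

end Shift

section FiniteDifference

variable {N : ℕ} {u : EuclideanSpace ℝ (Fin N) × ℝ → ℝ}

lemma pnormH_zero_right (h : EuclideanSpace ℝ (Fin N)) : pnormH h 0 = ‖h‖ := by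
  simp [pnormH]

lemma abs_fdiffP_le_semiP_mul {l : ℝ} {k : ℕ} (hS : semiP u l k ≠ ⊤)
    {h : EuclideanSpace ℝ (Fin N)} {τ : ℝ} (hH : ¬(h = 0 ∧ τ = 0)) (hτ : 0 ≤ τ)
    {x : EuclideanSpace ℝ (Fin N)} {t : ℝ} (ht : 0 ≤ t) :
    |fdiffP u k h τ x t| ≤ (semiP u l k).toReal * pnormH h τ ^ l := by
  have hH_pos : 0 < pnormH h τ := by
    rcases not_and_or.mp hH with hh | hτ0
    · exact add_pos_of_pos_of_nonneg (norm_pos_iff.mpr hh) (by positivity)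
    · exact add_pos_of_nonneg_of_pos (norm_nonneg h) (by positivity)
  have hle : ENNReal.ofReal (|fdiffP u k h τ x t| / pnormH h τ ^ l) ≤ semiP u l k :=
    le_iSup_of_le x <| le_iSup_of_le t <| le_iSup_of_le ht <| le_iSup_of_le h <|
      le_iSup_of_le τ <| le_iSup_of_le hτ <| le_iSup_of_le hH le_rfl
  rw [← div_le_iff₀ (by positivity)]
  exact ENNReal.ofReal_le_iff_le_toReal hS |>.mp hle

lemma abs_le_abs_fdiffP_add_sum (k : ℕ) (h : EuclideanSpace ℝ (Fin N)) (τ : ℝ)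
    (x : EuclideanSpace ℝ (Fin N)) (t : ℝ) :
    |u (x, t)| ≤ |fdiffP u k h τ x t| +
      ∑ i ∈ Finset.Icc 1 k, (k.choose i : ℝ) * |u (x + (i : ℝ) • h, t + i * τ)| := by
  set rest := ∑ i ∈ Finset.Icc 1 k,
    (-1 : ℝ) ^ (k - i) * (k.choose i : ℝ) * u (x + (i : ℝ) • h, t + i * τ)
  have hsplit : fdiffP u k h τ x t = (-1) ^ k * u (x, t) + rest := by
    rw [fdiffP, Finset.range_eq_Ico, Finset.sum_eq_sum_Ico_succ_bot (by omega : 0 < k + 1),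
      Finset.Ico_add_one_right_eq_Icc]
    simp [rest]
  calc |u (x, t)| = |fdiffP u k h τ x t - rest| := by simp [hsplit]
    _ ≤ |fdiffP u k h τ x t| + |rest| := abs_sub _ _
    _ ≤ _ := by
      gcongr
      exact (Finset.abs_sum_le_sum_abs _ _).trans_eq (by simp [abs_mul])

lemma sum_Icc_choose_le_two_pow (k : ℕ) : ∑ i ∈ Finset.Icc 1 k, (k.choose i : ℝ) ≤ 2 ^ k := by
  have : ∑ i ∈ Finset.Icc 1 k, k.choose i ≤ 2 ^ k :=
    Nat.sum_range_choose k ▸ Finset.sum_le_sum_of_subset fun i hi => by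
      simp only [Finset.mem_Icc] at hi; simp only [Finset.mem_range]; omega
  exact_mod_cast this

end FiniteDifference

section Slice

variable {N : ℕ} {u : EuclideanSpace ℝ (Fin N) × ℝ → ℝ}

lemma abs_le_semiP_mul_rpow_add_of_mul_volume_lt {l : ℝ} (hl : 0 ≤ l) {k : ℕ} (hk : 1 ≤ k)
    (hS : semiP u l k ≠ ⊤) (x : EuclideanSpace ℝ (Fin N)) {t : ℝ} (ht : 0 ≤ t) {lam r : ℝ}
    (hlam : 0 ≤ lam)
    (hvol : k * volume {y | lam ≤ |u (y, t)|} <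
      volume (Metric.ball (0 : EuclideanSpace ℝ (Fin N)) r)) :
    |u (x, t)| ≤ (semiP u l k).toReal * r ^ l + 2 ^ k * lam := by
  obtain ⟨h, hball, hsmall⟩ := exists_mem_ball_forall_add_smul_notMem volume x hvol
  simp only [Set.mem_ofPred_eq, not_le] at hsmall
  have hhr : ‖h‖ < r := mem_ball_zero_iff.mp hball
  by_cases h0 : h = 0
  · have hx : |u (x, t)| < lam := by simpa [h0] using hsmall 1 (by simp [hk])
    have : lam ≤ 2 ^ k * lam := le_mul_of_one_le_left hlam (one_le_pow₀ one_le_two)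
    have : 0 ≤ (semiP u l k).toReal * r ^ l := by
      have : 0 ≤ r := (norm_nonneg h).trans hhr.le
      positivity
    linarith
  calc |u (x, t)|
      ≤ |fdiffP u k h 0 x t| +
          ∑ i ∈ Finset.Icc 1 k, (k.choose i : ℝ) * |u (x + (i : ℝ) • h, t + i * 0)| :=
        abs_le_abs_fdiffP_add_sum k h 0 x t
    _ ≤ (semiP u l k).toReal * ‖h‖ ^ l + ∑ i ∈ Finset.Icc 1 k, (k.choose i : ℝ) * lam := by
        gcongr with i hi
        · simpa [pnormH_zero_right] using abs_fdiffP_le_semiP_mul hS (by simp [h0]) le_rfl ht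
        · simpa using (hsmall i hi).le
    _ ≤ (semiP u l k).toReal * r ^ l + 2 ^ k * lam := by
        rw [← Finset.sum_mul]
        gcongr
        exact sum_Icc_choose_le_two_pow k

lemma lintegral_slice_le_mpP_rpow (u : EuclideanSpace ℝ (Fin N) × ℝ → ℝ) {p : ℝ} (hp : 0 < p)
    {t : ℝ} (ht : 0 ≤ t) :
    ∫⁻ y, ENNReal.ofReal (|u (y, t)| ^ p) ≤ mpP u p ^ p := by
  have hslice : (∫⁻ y, ENNReal.ofReal (|u (y, t)| ^ p)) ^ (1 / p) ≤ mpP u p :=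
    le_iSup₂_of_le t ht le_rfl
  calc _ = ((∫⁻ y, ENNReal.ofReal (|u (y, t)| ^ p)) ^ (1 / p)) ^ p := by
        rw [← ENNReal.rpow_mul, one_div_mul_cancel hp.ne', ENNReal.rpow_one]
    _ ≤ mpP u p ^ p := ENNReal.rpow_le_rpow hslice hp.le

lemma volume_setOf_le_abs_le_mpP_div (hu : Continuous u) {p : ℝ} (hp : 0 < p)
    (hM : mpP u p ≠ ⊤) {t : ℝ} (ht : 0 ≤ t) {lam : ℝ} (hlam : 0 < lam) :
    volume {y | lam ≤ |u (y, t)|} ≤ ENNReal.ofReal ((mpP u p).toReal ^ p / lam ^ p) := by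
  have hmeas : AEMeasurable (fun y => ENNReal.ofReal (|u (y, t)| ^ p)) := by
    refine (ENNReal.continuous_ofReal.comp ?_).aemeasurable
    exact (hu.comp (.prodMk_left t)).abs.rpow_const fun _ => Or.inr hp.le
  rw [ENNReal.ofReal_div_of_pos (by positivity),
    ENNReal.le_div_iff_mul_le (by simp [Real.rpow_pos_of_pos hlam]) (by simp), mul_comm]
  calc ENNReal.ofReal (lam ^ p) * volume {y | lam ≤ |u (y, t)|}
      ≤ ENNReal.ofReal (lam ^ p) *
          volume {y | ENNReal.ofReal (lam ^ p) ≤ ENNReal.ofReal (|u (y, t)| ^ p)} := by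
        gcongr with y
        exact fun hy => ENNReal.ofReal_le_ofReal (by gcongr)
    _ ≤ ∫⁻ y, ENNReal.ofReal (|u (y, t)| ^ p) := mul_meas_ge_le_lintegral₀ hmeas _
    _ ≤ mpP u p ^ p := lintegral_slice_le_mpP_rpow u hp ht
    _ = ENNReal.ofReal ((mpP u p).toReal ^ p) := by
        rw [← ENNReal.ofReal_rpow_of_nonneg ENNReal.toReal_nonneg hp.le, ENNReal.ofReal_toReal hM]

lemma abs_le_semiP_mul_rpow_add_mpP_mul_rpow (hu : Continuous u) {p : ℝ} (hp : 0 < p) {l : ℝ}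
    (hl : 0 ≤ l) {k : ℕ} (hk : 1 ≤ k) (hS : semiP u l k ≠ ⊤) (hM : mpP u p ≠ ⊤)
    (x : EuclideanSpace ℝ (Fin N)) {t : ℝ} (ht : 0 ≤ t) {r : ℝ} (hr : 0 < r) :
    |u (x, t)| ≤ (semiP u l k).toReal * r ^ l +
      2 ^ k * (k / (volume (Metric.ball (0 : EuclideanSpace ℝ (Fin N)) 1)).toReal) ^ p⁻¹ *
        (mpP u p).toReal * r ^ (-(N / p : ℝ)) := by
  set v := (volume (Metric.ball (0 : EuclideanSpace ℝ (Fin N)) 1)).toReal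
  set S := (semiP u l k).toReal
  set M := (mpP u p).toReal
  set lam₀ := (k / v) ^ p⁻¹ * M * r ^ (-(N / p : ℝ))
  have hv : 0 < v :=
    ENNReal.toReal_pos (Metric.measure_ball_pos _ _ one_pos).ne' measure_ball_lt_top.ne
  have hball : volume (Metric.ball (0 : EuclideanSpace ℝ (Fin N)) r) =
      ENNReal.ofReal (r ^ N * v) := by
    rw [Measure.addHaar_ball_of_pos _ _ hr, finrank_euclideanSpace_fin,
      ENNReal.ofReal_mul (by positivity), ENNReal.ofReal_toReal measure_ball_lt_top.ne]
  have hlam₀ : lam₀ ^ p * (r ^ N * v) = k * M ^ p := by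
    have hK : ((k / v) ^ p⁻¹) ^ p = k / v := Real.rpow_inv_rpow (by positivity) hp.ne'
    have hρ : (r ^ (-(N / p : ℝ))) ^ p = (r ^ N)⁻¹ := by
      rw [← Real.rpow_mul hr.le, neg_mul, div_mul_cancel₀ _ hp.ne', Real.rpow_neg hr.le,
        Real.rpow_natCast]
    rw [Real.mul_rpow (by positivity) (by positivity),
      Real.mul_rpow (by positivity) (by positivity), hK, hρ]
    field_simp
  suffices H : ∀ lam > lam₀, |u (x, t)| ≤ S * r ^ l + 2 ^ k * lam by
    refine le_of_forall_pos_le_add fun ε hε => ?_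
    calc |u (x, t)| ≤ S * r ^ l + 2 ^ k * (lam₀ + ε / 2 ^ k) := H _ (by simp [hε])
      _ = S * r ^ l + 2 ^ k * lam₀ + ε := by field_simp; ring
      _ = _ := by simp only [lam₀]; ring
  intro lam hlam
  have hlam₀_nonneg : 0 ≤ lam₀ := by positivity
  refine abs_le_semiP_mul_rpow_add_of_mul_volume_lt hl hk hS x ht (hlam₀_nonneg.trans hlam.le) ?_
  calc (k : ℝ≥0∞) * volume {y | lam ≤ |u (y, t)|}
      ≤ k * ENNReal.ofReal (M ^ p / lam ^ p) := by
        gcongr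
        exact volume_setOf_le_abs_le_mpP_div hu hp hM ht (hlam₀_nonneg.trans_lt hlam)
    _ = ENNReal.ofReal (k * M ^ p / lam ^ p) := by
        rw [← ENNReal.ofReal_natCast, ← ENNReal.ofReal_mul (by positivity), mul_div_assoc]
    _ < ENNReal.ofReal (r ^ N * v) := by
        have : 0 < lam := hlam₀_nonneg.trans_lt hlam
        rw [ENNReal.ofReal_lt_ofReal_iff (by positivity), div_lt_iff₀ (by positivity), ← hlam₀,
          mul_comm]
        gcongr
    _ = volume (Metric.ball (0 : EuclideanSpace ℝ (Fin N)) r) := hball.symm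

end Slice

section Optimization

open Filter Topology

lemma le_two_mul_rpow_mul_rpow_of_forall_le_of_pos {A S M a b : ℝ} (ha : 0 < a) (hb : 0 < b)
    (hS : 0 < S) (hM : 0 < M) (H : ∀ r > 0, A ≤ S * r ^ a + M * r ^ (-b)) :
    A ≤ 2 * S ^ (b / (a + b)) * M ^ (1 - b / (a + b)) := by
  set r := (M / S) ^ (a + b)⁻¹
  have hr : 0 < r := by positivity
  have hlog_r : Real.log r = (Real.log M - Real.log S) / (a + b) := by
    rw [Real.log_rpow (by positivity), Real.log_div hM.ne' hS.ne']
    ring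
  have hexp : ∀ {X : ℝ}, 0 < X → ∀ y, X * r ^ y = Real.exp (Real.log X + Real.log r * y) :=
    fun hX y => by rw [Real.exp_add, Real.exp_log hX, Real.rpow_def_of_pos hr]
  have hrhs : S ^ (b / (a + b)) * M ^ (1 - b / (a + b)) =
      Real.exp (Real.log S * (b / (a + b)) + Real.log M * (1 - b / (a + b))) := by
    rw [Real.rpow_def_of_pos hS, Real.rpow_def_of_pos hM, Real.exp_add]
  have hbalance : S * r ^ a = S ^ (b / (a + b)) * M ^ (1 - b / (a + b)) ∧
      M * r ^ (-b) = S ^ (b / (a + b)) * M ^ (1 - b / (a + b)) := by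
    rw [hexp hS, hexp hM, hrhs, hlog_r]
    constructor <;> congr 1 <;> field_simp <;> ring
  linarith [H r hr, hbalance.1, hbalance.2]

lemma le_two_mul_rpow_mul_rpow_of_forall_le {A S M a b : ℝ} (ha : 0 < a) (hb : 0 < b)
    (hS : 0 ≤ S) (hM : 0 ≤ M) (H : ∀ r > 0, A ≤ S * r ^ a + M * r ^ (-b)) :
    A ≤ 2 * S ^ (b / (a + b)) * M ^ (1 - b / (a + b)) := by
  set σ := b / (a + b)
  have hσ : 0 < σ := by positivity
  have hσ' : 0 < 1 - σ := by
    rw [sub_pos, div_lt_one (by positivity)]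
    linarith
  have hlim : Tendsto (fun ε => 2 * (S + ε) ^ σ * (M + ε) ^ (1 - σ)) (𝓝[>] 0)
      (𝓝 (2 * S ^ σ * M ^ (1 - σ))) := by
    have : ContinuousAt (fun ε => 2 * (S + ε) ^ σ * (M + ε) ^ (1 - σ)) 0 :=
      ((continuousAt_const.add continuousAt_id).rpow_const (Or.inr hσ.le)).const_mul 2 |>.mul
        ((continuousAt_const.add continuousAt_id).rpow_const (Or.inr hσ'.le))
    simpa using this.tendsto.mono_left nhdsWithin_le_nhds
  refine ge_of_tendsto hlim (eventually_nhdsWithin_of_forall fun ε (hε : 0 < ε) => ?_)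
  refine le_two_mul_rpow_mul_rpow_of_forall_le_of_pos ha hb (by positivity) (by positivity)
    fun r hr => (H r hr).trans ?_
  gcongr <;> linarith

end Optimization

theorem interpolation_sup_holder_mp_general (N : ℕ) (hN : 1 ≤ N) (p : ℝ) (hp : 1 < p)
    (l : ℝ) (hl : 0 < l) :
    ∃ C : ℝ, 0 < C ∧
      ∀ u : EuclideanSpace ℝ (Fin N) × ℝ → ℝ, Continuous u →
        Bornology.IsBounded (Set.range u) →
        semiP u l ⌈l⌉₊ < ⊤ → mpP u p < ⊤ →
        ∀ (x : EuclideanSpace ℝ (Fin N)) (t : ℝ), 0 ≤ t →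
          |u (x, t)| ≤ C * (semiP u l ⌈l⌉₊).toReal ^ ((N : ℝ) / (l * p + N)) *
            (mpP u p).toReal ^ (1 - (N : ℝ) / (l * p + N)) := by
  have hp₀ : 0 < p := zero_lt_one.trans hp
  have hk : 1 ≤ ⌈l⌉₊ := Nat.ceil_pos.mpr hl
  have hb : 0 < (N : ℝ) / p := by positivity
  have hσ : (N : ℝ) / p / (l + N / p) = N / (l * p + N) := by field_simp
  set c := 2 ^ ⌈l⌉₊ *
    (⌈l⌉₊ / (volume (Metric.ball (0 : EuclideanSpace ℝ (Fin N)) 1)).toReal) ^ p⁻¹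
  have hv : 0 < (volume (Metric.ball (0 : EuclideanSpace ℝ (Fin N)) 1)).toReal :=
    ENNReal.toReal_pos (Metric.measure_ball_pos _ _ one_pos).ne' measure_ball_lt_top.ne
  refine ⟨2 * c ^ (1 - (N : ℝ) / (l * p + N)), by positivity, ?_⟩
  intro u hu _ hS hM x t ht
  have key := le_two_mul_rpow_mul_rpow_of_forall_le (A := |u (x, t)|) hl hb ENNReal.toReal_nonneg
    (by positivity : 0 ≤ c * (mpP u p).toReal) fun r hr =>
      abs_le_semiP_mul_rpow_add_mpP_mul_rpow hu hp₀ hl.le hk hS.ne hM.ne x ht hr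
  rw [hσ, Real.mul_rpow (by positivity) ENNReal.toReal_nonneg] at key
  exact key.trans_eq (by ring)

/-- Lemma 2.1, inequality (2.3.3), whole-space case. -/
theorem interpolation_sup_holder_mp (N : ℕ) (hN : 1 ≤ N) (p : ℝ) (hp : 1 < p)
    (l : ℝ) (hl : 0 < l) (hlni : ∀ n : ℤ, (n : ℝ) ≠ l) :
    ∃ C : ℝ, 0 < C ∧
      ∀ u : EuclideanSpace ℝ (Fin N) × ℝ → ℝ, Continuous u →
        Bornology.IsBounded (Set.range u) →
        semiP u l ⌈l⌉₊ < ⊤ → mpP u p < ⊤ →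
        ∀ (x : EuclideanSpace ℝ (Fin N)) (t : ℝ), 0 ≤ t →
          |u (x, t)| ≤ C * (semiP u l ⌈l⌉₊).toReal ^ ((N : ℝ) / (l * p + N)) *
            (mpP u p).toReal ^ (1 - (N : ℝ) / (l * p + N)) :=
  interpolation_sup_holder_mp_general N hN p hp l hl
end

section
/- (Intermediate inequality (2.8).) Let l > 0 be noninteger. There is a constant C = C(N, l, p) > 0 such that for every bounded continuous function u : ℝ^N × ℝ → ℝ with ⟨u⟩^{(l)} < ∞ and ‖u‖_p < ∞, and for every ε > 0, one has sup_{x ∈ ℝ^N, t ≥ 0} |u(x,t)| ≤ C ε^l ⟨u⟩^{(l)} + C ε^{-(N+2)/p} ‖u‖_p. -/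
open MeasureTheory Finset ENNReal

/-!
Fix `(x, t)` with `t ≥ 0` and `ε > 0`. For every increment `H = (h, τ)` in the forward cylinder
`Ω = B(0, ε) × (0, ε²)`, solving the `k`-th difference `Δ_H^k u(x, t)` for its `i = 0` term gives
`|u(x, t)| ≤ |Δ_H^k u(x, t)| + Σ_{i=1}^k C(k, i) |u((x, t) + i H)|`.
The first term is at most `⟨u⟩^{(l)} ‖H‖^l ≤ ⟨u⟩^{(l)} (2ε)^l`. Each shifted term, averaged over
`H ∈ Ω`, is at most `‖u‖_p |Ω|^{-1/p}` by Hölder's inequality, because `H ↦ (x, t) + i H` maps `Ω`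
into the half-space `t > 0` and the change of variables has Jacobian factor `i^{-(N+1)} ≤ 1`.
Since `|Ω| = c_N ε^{N+2}`, choosing `H ∈ Ω` where the sum of shifted terms is at most its average
gives the inequality.
-/

section Haar

variable {V : Type*} [NormedAddCommGroup V] [NormedSpace ℝ V] [MeasurableSpace V] [BorelSpace V]
  [FiniteDimensional ℝ V] (μ : Measure V) [μ.IsAddHaarMeasure]

theorem lintegral_comp_add_smul_le {G : V → ℝ≥0∞} (hG : Measurable G) (a : V) {c : ℝ}
    (hc : 1 ≤ c) : ∫⁻ z, G (a + c • z) ∂μ ≤ ∫⁻ z, G z ∂μ := by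
  have hc0 : 0 < c := one_pos.trans_le hc
  have hjac : ENNReal.ofReal |(c ^ Module.finrank ℝ V)⁻¹| ≤ 1 := by
    rw [ENNReal.ofReal_le_one, abs_inv, abs_pow, abs_of_pos hc0]
    exact inv_le_one_of_one_le₀ (one_le_pow₀ hc)
  calc ∫⁻ z, G (a + c • z) ∂μ = ∫⁻ z, G (a + z) ∂(Measure.map (c • ·) μ) :=
        (lintegral_map (hG.comp (measurable_const_add a)) (measurable_const_smul c)).symm
    _ = ENNReal.ofReal |(c ^ Module.finrank ℝ V)⁻¹| * ∫⁻ z, G z ∂μ := by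
        rw [Measure.map_addHaar_smul μ hc0.ne', lintegral_smul_measure, smul_eq_mul,
          lintegral_add_left_eq_self]
    _ ≤ ∫⁻ z, G z ∂μ := mul_le_of_le_one_left' hjac

end Haar

theorem setLIntegral_le_lintegral_rpow_mul_measure_rpow {α : Type*} [MeasurableSpace α]
    (μ : Measure α) {p q : ℝ} (hpq : p.HolderConjugate q) {s : Set α} {f : α → ℝ≥0∞}
    (hf : AEMeasurable f (μ.restrict s)) :
    ∫⁻ a in s, f a ∂μ ≤ (∫⁻ a in s, f a ^ p ∂μ) ^ (1 / p) * μ s ^ (1 / q) := by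
  simpa [Measure.restrict_apply_univ] using
    ENNReal.lintegral_mul_le_Lp_mul_Lq (μ.restrict s) hpq hf (aemeasurable_const (b := 1))

section Parabolic

variable {N : ℕ}

instance : (volume : Measure (EuclideanSpace ℝ (Fin N) × ℝ)).IsAddHaarMeasure :=
  inferInstanceAs (volume.prod volume).IsAddHaarMeasure

def forwardCylinder (N : ℕ) (ε : ℝ) : Set (EuclideanSpace ℝ (Fin N) × ℝ) :=
  Metric.ball 0 ε ×ˢ Set.Ioo 0 (ε ^ 2)

def shiftSum (u : EuclideanSpace ℝ (Fin N) × ℝ → ℝ) (k : ℕ)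
    (z H : EuclideanSpace ℝ (Fin N) × ℝ) : ℝ :=
  ∑ i ∈ range k, (k.choose (i + 1) : ℝ) * |u (z + ((i + 1 : ℕ) : ℝ) • H)|

theorem measurable_shiftSum {u : EuclideanSpace ℝ (Fin N) × ℝ → ℝ} (hu : Measurable u) (k : ℕ)
    (z : EuclideanSpace ℝ (Fin N) × ℝ) : Measurable (shiftSum u k z) :=
  Finset.measurable_sum _ fun _ _ => measurable_const.mul
    (hu.comp ((measurable_const_add z).comp (measurable_const_smul _))).abs

theorem abs_le_abs_fdiffP_add_shiftSum (u : EuclideanSpace ℝ (Fin N) × ℝ → ℝ) (k : ℕ)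
    (h : EuclideanSpace ℝ (Fin N)) (τ : ℝ) (x : EuclideanSpace ℝ (Fin N)) (t : ℝ) :
    |u (x, t)| ≤ |fdiffP u k h τ x t| + shiftSum u k (x, t) (h, τ) := by
  set T := ∑ i ∈ range k, (-1 : ℝ) ^ (k - (i + 1)) * (k.choose (i + 1) : ℝ) *
    u ((x, t) + ((i + 1 : ℕ) : ℝ) • (h, τ))
  have hsplit : fdiffP u k h τ x t = T + (-1) ^ k * u (x, t) := by
    simp [fdiffP, sum_range_succ', T]
  have hT : |T| ≤ shiftSum u k (x, t) (h, τ) :=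
    (abs_sum_le_sum_abs _ _).trans_eq (sum_congr rfl fun i _ => by simp [abs_mul])
  calc |u (x, t)| = |fdiffP u k h τ x t - T| := by simp [hsplit, abs_mul]
    _ ≤ |fdiffP u k h τ x t| + |T| := abs_sub _ _
    _ ≤ |fdiffP u k h τ x t| + shiftSum u k (x, t) (h, τ) := by gcongr

theorem pnormH_pos {h : EuclideanSpace ℝ (Fin N)} {τ : ℝ} (hH : ¬(h = 0 ∧ τ = 0)) :
    0 < pnormH h τ := by
  rcases not_and_or.1 hH with hh | hτ
  · exact add_pos_of_pos_of_nonneg (norm_pos_iff.2 hh) (by positivity)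
  · exact add_pos_of_nonneg_of_pos (norm_nonneg h) (by positivity)

theorem abs_fdiffP_le (u : EuclideanSpace ℝ (Fin N) × ℝ → ℝ) (l : ℝ) (k : ℕ)
    (hS : semiP u l k ≠ ⊤) {x : EuclideanSpace ℝ (Fin N)} {t : ℝ} (ht : 0 ≤ t)
    {h : EuclideanSpace ℝ (Fin N)} {τ : ℝ} (hτ : 0 ≤ τ) (hH : ¬(h = 0 ∧ τ = 0)) :
    |fdiffP u k h τ x t| ≤ (semiP u l k).toReal * pnormH h τ ^ l := by
  have hle : ENNReal.ofReal (|fdiffP u k h τ x t| / pnormH h τ ^ l) ≤ semiP u l k :=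
    le_iSup₂_of_le x t <| le_iSup₂_of_le ht h <| le_iSup₂_of_le τ hτ <| le_iSup_of_le hH le_rfl
  rw [← div_le_iff₀ (Real.rpow_pos_of_pos (pnormH_pos hH) l)]
  exact (ENNReal.ofReal_le_iff_le_toReal hS).1 hle

theorem pnormH_le_of_mem_forwardCylinder {ε : ℝ} {h : EuclideanSpace ℝ (Fin N)} {τ : ℝ}
    (hH : (h, τ) ∈ forwardCylinder N ε) : pnormH h τ ≤ 2 * ε := by
  obtain ⟨hh, hτ0, hτ⟩ := hH
  rw [mem_ball_zero_iff] at hh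
  have hε : 0 ≤ ε := (norm_nonneg h).trans hh.le
  have hsqrt : |τ| ^ (1 / 2 : ℝ) ≤ ε := by
    rw [abs_of_pos hτ0, ← Real.sqrt_eq_rpow]
    exact (Real.sqrt_le_sqrt hτ.le).trans_eq (Real.sqrt_sq hε)
  unfold pnormH
  linarith

theorem volume_forwardCylinder {ε : ℝ} (hε : 0 < ε) :
    volume (forwardCylinder N ε) =
      ENNReal.ofReal (ε ^ (N + 2)) * volume (Metric.ball (0 : EuclideanSpace ℝ (Fin N)) 1) := by
  rw [forwardCylinder, Measure.volume_eq_prod, Measure.prod_prod,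
    Measure.addHaar_ball_of_pos _ _ hε, Real.volume_Ioo, sub_zero, finrank_euclideanSpace_fin,
    mul_right_comm, ← ENNReal.ofReal_mul (by positivity), ← pow_add]

theorem volume_forwardCylinder_rpow {ε : ℝ} (hε : 0 < ε) (r : ℝ) :
    volume (forwardCylinder N ε) ^ r =
      ENNReal.ofReal (ε ^ (((N : ℝ) + 2) * r)) *
        volume (Metric.ball (0 : EuclideanSpace ℝ (Fin N)) 1) ^ r := by
  rw [volume_forwardCylinder hε, ENNReal.mul_rpow_of_ne_zero
      (ENNReal.ofReal_pos.2 (by positivity)).ne' (Metric.measure_ball_pos _ _ one_pos).ne',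
    ENNReal.ofReal_rpow_of_pos (by positivity), ← Real.rpow_natCast, ← Real.rpow_mul hε.le]
  push_cast
  rfl

theorem volume_forwardCylinder_ne_zero {ε : ℝ} (hε : 0 < ε) :
    volume (forwardCylinder N ε) ≠ 0 := by
  rw [volume_forwardCylinder hε]
  exact mul_ne_zero (ENNReal.ofReal_pos.2 (by positivity)).ne'
    (Metric.measure_ball_pos _ _ one_pos).ne'

theorem volume_forwardCylinder_ne_top {ε : ℝ} (hε : 0 < ε) :
    volume (forwardCylinder N ε) ≠ ⊤ := by
  rw [volume_forwardCylinder hε]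
  exact ENNReal.mul_ne_top ENNReal.ofReal_ne_top measure_ball_lt_top.ne

theorem setLIntegral_abs_comp_add_smul_le_lpP {u : EuclideanSpace ℝ (Fin N) × ℝ → ℝ}
    (hu : Measurable u) {p q : ℝ} (hpq : p.HolderConjugate q)
    {Ω : Set (EuclideanSpace ℝ (Fin N) × ℝ)} (hΩ : Ω ⊆ {H | 0 < H.2})
    {z : EuclideanSpace ℝ (Fin N) × ℝ} (hz : 0 ≤ z.2) {c : ℝ} (hc : 1 ≤ c) :
    ∫⁻ H in Ω, ENNReal.ofReal |u (z + c • H)| ≤ lpP u p * volume Ω ^ (1 / q) := by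
  set P := {w : EuclideanSpace ℝ (Fin N) × ℝ | 0 < w.2}
  set G := P.indicator fun w => ENNReal.ofReal (|u w| ^ p)
  have hP : MeasurableSet P := measurable_snd measurableSet_Ioi
  have hG : Measurable G := (ENNReal.measurable_ofReal.comp (hu.abs.pow_const p)).indicator hP
  have hshift : Measurable fun H : EuclideanSpace ℝ (Fin N) × ℝ => z + c • H :=
    (measurable_const_add z).comp (measurable_const_smul c)
  have hmaps : ∀ H ∈ Ω, ENNReal.ofReal |u (z + c • H)| ^ p ≤ G (z + c • H) := fun H hH => by
    have hH2 : 0 < H.2 := hΩ hH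
    have hmem : z + c • H ∈ P := by
      show 0 < z.2 + c * H.2
      nlinarith
    simp only [G, Set.indicator_of_mem hmem]
    exact (ENNReal.ofReal_rpow_of_nonneg (abs_nonneg _) hpq.nonneg).le
  have hpow :
      ∫⁻ H in Ω, ENNReal.ofReal |u (z + c • H)| ^ p ≤ ∫⁻ w in P, ENNReal.ofReal (|u w| ^ p) :=
    calc ∫⁻ H in Ω, ENNReal.ofReal |u (z + c • H)| ^ p ≤ ∫⁻ H in Ω, G (z + c • H) :=
          setLIntegral_mono (hG.comp hshift) hmaps
      _ ≤ ∫⁻ H, G (z + c • H) := setLIntegral_le_lintegral _ _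
      _ ≤ ∫⁻ w, G w := lintegral_comp_add_smul_le volume hG z hc
      _ = ∫⁻ w in P, ENNReal.ofReal (|u w| ^ p) := lintegral_indicator hP _
  calc ∫⁻ H in Ω, ENNReal.ofReal |u (z + c • H)|
      ≤ (∫⁻ H in Ω, ENNReal.ofReal |u (z + c • H)| ^ p) ^ (1 / p) * volume Ω ^ (1 / q) :=
        setLIntegral_le_lintegral_rpow_mul_measure_rpow volume hpq
          (ENNReal.measurable_ofReal.comp (hu.comp hshift).abs).aemeasurable
    _ ≤ lpP u p * volume Ω ^ (1 / q) := by
        unfold lpP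
        gcongr
        exact hpq.one_div_nonneg

theorem setLIntegral_shiftSum_le {u : EuclideanSpace ℝ (Fin N) × ℝ → ℝ} (hu : Measurable u)
    {p q : ℝ} (hpq : p.HolderConjugate q) {Ω : Set (EuclideanSpace ℝ (Fin N) × ℝ)}
    (hΩ : Ω ⊆ {H | 0 < H.2}) {z : EuclideanSpace ℝ (Fin N) × ℝ} (hz : 0 ≤ z.2) (k : ℕ) :
    ∫⁻ H in Ω, ENNReal.ofReal (shiftSum u k z H) ≤ 2 ^ k * (lpP u p * volume Ω ^ (1 / q)) := by
  have hchoose : ∑ i ∈ range k, (k.choose (i + 1) : ℝ≥0∞) ≤ 2 ^ k := by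
    have h := Nat.sum_range_choose k
    rw [sum_range_succ'] at h
    exact_mod_cast h ▸ Nat.le_add_right _ _
  calc ∫⁻ H in Ω, ENNReal.ofReal (shiftSum u k z H)
      = ∑ i ∈ range k, (k.choose (i + 1) : ℝ≥0∞) *
          ∫⁻ H in Ω, ENNReal.ofReal |u (z + ((i + 1 : ℕ) : ℝ) • H)| := by
        have hterm : ∀ i, Measurable fun H => ENNReal.ofReal |u (z + ((i + 1 : ℕ) : ℝ) • H)| :=
          fun i => ENNReal.measurable_ofReal.comp
            (hu.comp ((measurable_const_add z).comp (measurable_const_smul _))).abs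
        have hsplit : ∀ H, ENNReal.ofReal (shiftSum u k z H) = ∑ i ∈ range k,
            (k.choose (i + 1) : ℝ≥0∞) * ENNReal.ofReal |u (z + ((i + 1 : ℕ) : ℝ) • H)| :=
          fun H => by
            rw [shiftSum, ENNReal.ofReal_sum_of_nonneg fun i _ => by positivity]
            simp only [ENNReal.ofReal_mul (Nat.cast_nonneg _), ENNReal.ofReal_natCast]
        simp only [hsplit]
        rw [lintegral_finsetSum _ fun i _ => (hterm i).const_mul _]
        simp only [lintegral_const_mul _ (hterm _)]
    _ ≤ ∑ i ∈ range k, (k.choose (i + 1) : ℝ≥0∞) * (lpP u p * volume Ω ^ (1 / q)) := by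
        gcongr with i
        exact setLIntegral_abs_comp_add_smul_le_lpP hu hpq hΩ hz (by simp)
    _ ≤ 2 ^ k * (lpP u p * volume Ω ^ (1 / q)) := by
        rw [← sum_mul]
        gcongr

theorem setLAverage_shiftSum_forwardCylinder_le {u : EuclideanSpace ℝ (Fin N) × ℝ → ℝ}
    (hu : Measurable u) {p : ℝ} (hp : 1 < p) (k : ℕ) {ε : ℝ} (hε : 0 < ε)
    {z : EuclideanSpace ℝ (Fin N) × ℝ} (hz : 0 ≤ z.2) :
    ⨍⁻ H in forwardCylinder N ε, ENNReal.ofReal (shiftSum u k z H) ∂volume ≤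
      2 ^ k * lpP u p * (ENNReal.ofReal (ε ^ (-(N + 2 : ℝ) / p)) *
        volume (Metric.ball (0 : EuclideanSpace ℝ (Fin N)) 1) ^ (-1 / p)) := by
  have hpq := Real.HolderConjugate.conjExponent hp
  set m := volume (forwardCylinder N ε)
  have hm0 : m ≠ 0 := volume_forwardCylinder_ne_zero hε
  have hmtop : m ≠ ⊤ := volume_forwardCylinder_ne_top hε
  have hmq : m ^ (1 / p.conjExponent) = m ^ (-1 / p) * m :=
    calc m ^ (1 / p.conjExponent) = m ^ (-1 / p + 1) := by
          rw [one_div, ← hpq.one_sub_inv]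
          ring_nf
      _ = m ^ (-1 / p) * m := by rw [ENNReal.rpow_add _ _ hm0 hmtop, ENNReal.rpow_one]
  rw [setLAverage_eq, ENNReal.div_le_iff hm0 hmtop]
  calc ∫⁻ H in forwardCylinder N ε, ENNReal.ofReal (shiftSum u k z H)
      ≤ 2 ^ k * (lpP u p * m ^ (1 / p.conjExponent)) :=
        setLIntegral_shiftSum_le hu hpq (fun H hH => hH.2.1) hz k
    _ = 2 ^ k * lpP u p * m ^ (-1 / p) * m := by rw [hmq]; ring
    _ = _ := by
        rw [volume_forwardCylinder_rpow hε,
          show ((N : ℝ) + 2) * (-1 / p) = -(N + 2 : ℝ) / p by ring]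

theorem exists_mem_forwardCylinder_shiftSum_le {u : EuclideanSpace ℝ (Fin N) × ℝ → ℝ}
    (hu : Measurable u) {p : ℝ} (hp : 1 < p) (hL : lpP u p ≠ ⊤) (k : ℕ) {ε : ℝ} (hε : 0 < ε)
    {z : EuclideanSpace ℝ (Fin N) × ℝ} (hz : 0 ≤ z.2) :
    ∃ H ∈ forwardCylinder N ε, shiftSum u k z H ≤ 2 ^ k * (lpP u p).toReal *
      (ε ^ (-(N + 2 : ℝ) / p) *
        (volume (Metric.ball (0 : EuclideanSpace ℝ (Fin N)) 1) ^ (-1 / p)).toReal) := by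
  obtain ⟨H, hH, hmin⟩ := exists_le_setLAverage (volume_forwardCylinder_ne_zero hε)
    (volume_forwardCylinder_ne_top hε) (f := fun H => ENNReal.ofReal (shiftSum u k z H))
    (ENNReal.measurable_ofReal.comp (measurable_shiftSum hu k z)).aemeasurable
  have hle := hmin.trans (setLAverage_shiftSum_forwardCylinder_le hu hp k hε hz)
  have hv : volume (Metric.ball (0 : EuclideanSpace ℝ (Fin N)) 1) ^ (-1 / p) ≠ ⊤ :=
    ENNReal.rpow_ne_top_of_ne_zero (Metric.measure_ball_pos _ _ one_pos).ne'
      measure_ball_lt_top.ne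
  rw [ENNReal.ofReal_le_iff_le_toReal (by finiteness), ENNReal.toReal_mul, ENNReal.toReal_mul,
    ENNReal.toReal_mul, ENNReal.toReal_ofReal (by positivity)] at hle
  exact ⟨H, hH, hle⟩

end Parabolic

theorem intermediate_eps_inequality_lp_general (N : ℕ) (p : ℝ) (hp : 1 < p)
    (l : ℝ) (hl : 0 < l) :
    ∃ C : ℝ, 0 < C ∧
      ∀ u : EuclideanSpace ℝ (Fin N) × ℝ → ℝ, Continuous u →
        Bornology.IsBounded (Set.range u) →
        semiP u l ⌈l⌉₊ < ⊤ → lpP u p < ⊤ →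
        ∀ ε : ℝ, 0 < ε →
          ∀ (x : EuclideanSpace ℝ (Fin N)) (t : ℝ), 0 ≤ t →
            |u (x, t)| ≤ C * ε ^ l * (semiP u l ⌈l⌉₊).toReal +
              C * ε ^ (-(N + 2 : ℝ) / p) * (lpP u p).toReal := by
  set c := (volume (Metric.ball (0 : EuclideanSpace ℝ (Fin N)) 1) ^ (-1 / p)).toReal
  refine ⟨2 ^ l + 2 ^ ⌈l⌉₊ * c, by positivity, ?_⟩
  intro u hu _ hS hL ε hε x t ht
  obtain ⟨⟨h, τ⟩, hH, htail⟩ :=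
    exists_mem_forwardCylinder_shiftSum_le hu.measurable hp hL.ne ⌈l⌉₊ hε (z := (x, t)) ht
  have hH0 : ¬(h = 0 ∧ τ = 0) := fun h0 => hH.2.1.ne' h0.2
  have hdiff : |fdiffP u ⌈l⌉₊ h τ x t| ≤ (semiP u l ⌈l⌉₊).toReal * (2 * ε) ^ l := by
    refine (abs_fdiffP_le u l _ hS.ne ht hH.2.1.le hH0).trans ?_
    gcongr
    exacts [(pnormH_pos hH0).le, pnormH_le_of_mem_forwardCylinder hH]
  rw [Real.mul_rpow zero_le_two hε.le] at hdiff
  calc |u (x, t)| ≤ |fdiffP u ⌈l⌉₊ h τ x t| + shiftSum u ⌈l⌉₊ (x, t) (h, τ) :=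
        abs_le_abs_fdiffP_add_shiftSum u _ h τ x t
    _ ≤ 2 ^ l * ε ^ l * (semiP u l ⌈l⌉₊).toReal +
          2 ^ ⌈l⌉₊ * c * ε ^ (-(N + 2 : ℝ) / p) * (lpP u p).toReal := by
        linarith
    _ ≤ _ := by
        gcongr
        · exact le_add_of_nonneg_right (by positivity)
        · exact le_add_of_nonneg_left (by positivity)

/-- Intermediate inequality (2.8). -/
theorem intermediate_eps_inequality_lp (N : ℕ) (hN : 1 ≤ N) (p : ℝ) (hp : 1 < p)
    (l : ℝ) (hl : 0 < l) (hlni : ∀ n : ℤ, (n : ℝ) ≠ l) :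
    ∃ C : ℝ, 0 < C ∧
      ∀ u : EuclideanSpace ℝ (Fin N) × ℝ → ℝ, Continuous u →
        Bornology.IsBounded (Set.range u) →
        semiP u l ⌈l⌉₊ < ⊤ → lpP u p < ⊤ →
        ∀ ε : ℝ, 0 < ε →
          ∀ (x : EuclideanSpace ℝ (Fin N)) (t : ℝ), 0 ≤ t →
            |u (x, t)| ≤ C * ε ^ l * (semiP u l ⌈l⌉₊).toReal +
              C * ε ^ (-(N + 2 : ℝ) / p) * (lpP u p).toReal :=
  intermediate_eps_inequality_lp_general N p hp l hl
end

section
/- (Intermediate inequality for the sup-in-time L^p norm.) Let l > 0 be noninteger. There is a constant C = C(N, l, p) > 0 such that for every bounded continuous function u : ℝ^N × ℝ → ℝ with ⟨u⟩^{(l)} < ∞ and M_p(u) < ∞, and for every ε > 0, one has sup_{x ∈ ℝ^N, t ≥ 0} |u(x,t)| ≤ C ε^l ⟨u⟩^{(l)} + C ε^{-N/p} M_p(u). -/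
open MeasureTheory Finset ENNReal

set_option maxHeartbeats 1000000 in
/-- Intermediate inequality for the sup-in-time `L^p` norm. -/
theorem intermediate_eps_inequality_mp (N : ℕ) (hN : 1 ≤ N) (p : ℝ) (hp : 1 < p)
    (l : ℝ) (hl : 0 < l) (hlni : ∀ n : ℤ, (n : ℝ) ≠ l) :
    ∃ C : ℝ, 0 < C ∧
      ∀ u : EuclideanSpace ℝ (Fin N) × ℝ → ℝ, Continuous u →
        Bornology.IsBounded (Set.range u) →
        semiP u l ⌈l⌉₊ < ⊤ → mpP u p < ⊤ →
        ∀ ε : ℝ, 0 < ε →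
          ∀ (x : EuclideanSpace ℝ (Fin N)) (t : ℝ), 0 ≤ t →
            |u (x, t)| ≤ C * ε ^ l * (semiP u l ⌈l⌉₊).toReal +
              C * ε ^ (-(N : ℝ) / p) * (mpP u p).toReal := by
  classical
  have hp0 : (0:ℝ) < p := lt_trans one_pos hp
  set k := ⌈l⌉₊ with hkdef
  have hk1 : 1 ≤ k := Nat.ceil_pos.mpr hl
  set c0 : ℝ := (volume (Metric.ball (0 : EuclideanSpace ℝ (Fin N)) 1)).toReal with hc0def
  have hc0pos : 0 < c0 := ENNReal.toReal_pos
    (Metric.measure_ball_pos volume _ one_pos).ne' measure_ball_lt_top.ne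
  refine ⟨1 + 2 ^ k * ((k : ℝ) / c0) ^ ((1:ℝ)/p), by positivity, ?_⟩
  intro u hu hub hSfin hMfin ε hε x t ht
  set C : ℝ := 1 + 2 ^ k * ((k : ℝ) / c0) ^ ((1:ℝ)/p) with hCdef
  have hCpos : 0 < C := by rw [hCdef]; positivity
  have hC1 : 1 ≤ C := by
    rw [hCdef]
    nlinarith [Real.rpow_nonneg (show (0:ℝ) ≤ (k:ℝ)/c0 by positivity) ((1:ℝ)/p),
      pow_pos (show (0:ℝ) < 2 by norm_num) k]
  set S : ℝ := (semiP u l k).toReal with hSdef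
  set M : ℝ := (mpP u p).toReal with hMdef
  have hS0 : 0 ≤ S := ENNReal.toReal_nonneg
  have hM0 : 0 ≤ M := ENNReal.toReal_nonneg
  have hεl : 0 < ε ^ l := Real.rpow_pos_of_pos hε l
  have hεNp : 0 < ε ^ (-(N:ℝ)/p) := Real.rpow_pos_of_pos hε _
  have hterm2 : 0 ≤ C * ε ^ (-(N:ℝ)/p) * M :=
    mul_nonneg (mul_nonneg hCpos.le hεNp.le) hM0
  by_cases hcase : |u (x, t)| ≤ S * ε ^ l
  · have h1 : S * ε ^ l ≤ C * ε ^ l * S := by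
      nlinarith [mul_nonneg (sub_nonneg.mpr hC1) (mul_nonneg hεl.le hS0)]
    calc |u (x, t)| ≤ S * ε ^ l := hcase
      _ ≤ C * ε ^ l * S := h1
      _ ≤ C * ε ^ l * S + C * ε ^ (-(N:ℝ)/p) * M := le_add_of_nonneg_right hterm2
  push_neg at hcase
  set A : ℝ := (|u (x, t)| - S * ε ^ l) / 2 ^ k with hAdef
  have hApos : 0 < A := div_pos (by linarith) (by positivity)
  have h2kA : (2:ℝ) ^ k * A = |u (x, t)| - S * ε ^ l := by
    rw [hAdef]; field_simp
  -- Step 1: seminorm pointwise bound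
  have hSemi : ∀ h : EuclideanSpace ℝ (Fin N), h ≠ 0 → ‖h‖ ≤ ε →
      |fdiffP u k h 0 x t| ≤ S * ε ^ l := by
    intro h h0 hhε
    have hpn : pnormH h 0 = ‖h‖ := by
      simp [pnormH, Real.zero_rpow (by norm_num : (1:ℝ)/2 ≠ 0)]
    have hle : ENNReal.ofReal (|fdiffP u k h 0 x t| / pnormH h 0 ^ l) ≤ semiP u l k := by
      refine le_iSup_of_le x (le_iSup_of_le t (le_iSup_of_le ht (le_iSup_of_le h
        (le_iSup_of_le 0 (le_iSup_of_le le_rfl (le_iSup_of_le ?_ le_rfl))))))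
      simp [h0]
    have h2 := (ENNReal.ofReal_le_iff_le_toReal hSfin.ne).mp hle
    rw [hpn] at h2
    have hn : 0 < ‖h‖ := norm_pos_iff.mpr h0
    have hnl : 0 < ‖h‖ ^ l := Real.rpow_pos_of_pos hn l
    rw [div_le_iff₀ hnl] at h2
    calc |fdiffP u k h 0 x t| ≤ S * ‖h‖ ^ l := h2
      _ ≤ S * ε ^ l :=
        mul_le_mul_of_nonneg_left (Real.rpow_le_rpow hn.le hhε hl.le) hS0
  -- expansion of the finite difference
  have hexp : ∀ h : EuclideanSpace ℝ (Fin N),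
      fdiffP u k h 0 x t =
        (∑ i ∈ Finset.range k, (-1:ℝ) ^ (k - (i+1)) * (k.choose (i+1) : ℝ) *
          u (x + ((i:ℝ)+1) • h, t)) + (-1:ℝ) ^ k * u (x, t) := by
    intro h
    rw [fdiffP, Finset.sum_range_succ']
    congr 1
    · refine Finset.sum_congr rfl fun i _ => ?_
      push_cast
      norm_num
    · push_cast
      norm_num
  -- covering claim
  have hcover : ∀ h : EuclideanSpace ℝ (Fin N), ‖h‖ ≤ ε →
      ∃ i ∈ Finset.range k, A ≤ |u (x + ((i:ℝ)+1) • h, t)| := by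
    intro h hh
    by_contra hc
    push_neg at hc
    by_cases h0 : h = 0
    · have h1 := hc 0 (Finset.mem_range.mpr hk1)
      rw [h0] at h1
      simp only [smul_zero, add_zero] at h1
      have hb : (1:ℝ) ≤ 2 ^ k := by exact_mod_cast Nat.one_le_two_pow
      have h5 : A ≤ 2 ^ k * A := le_mul_of_one_le_left hApos.le hb
      have h6 : 0 ≤ S * ε ^ l := mul_nonneg hS0 hεl.le
      linarith [h2kA]
    · have hb := hSemi h h0 hh
      rw [hexp h] at hb
      set T : ℝ := ∑ i ∈ Finset.range k, (-1:ℝ) ^ (k - (i+1)) * (k.choose (i+1) : ℝ) *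
          u (x + ((i:ℝ)+1) • h, t) with hTdef
      have habs1 : |u (x, t)| ≤ S * ε ^ l + |T| := by
        have e1 : |(-1:ℝ) ^ k * u (x, t)| = |u (x, t)| := by
          rw [abs_mul, abs_pow, abs_neg, abs_one, one_pow, one_mul]
        calc |u (x, t)| = |(-1:ℝ) ^ k * u (x, t)| := e1.symm
          _ = |(T + (-1:ℝ) ^ k * u (x, t)) - T| := by ring_nf
          _ ≤ |T + (-1:ℝ) ^ k * u (x, t)| + |T| := abs_sub _ _
          _ ≤ S * ε ^ l + |T| := by linarith
      have habs2 : |T| ≤ ∑ i ∈ Finset.range k, (k.choose (i+1) : ℝ) *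
          |u (x + ((i:ℝ)+1) • h, t)| := by
        refine (Finset.abs_sum_le_sum_abs _ _).trans (le_of_eq ?_)
        refine Finset.sum_congr rfl fun i _ => ?_
        rw [abs_mul, abs_mul, abs_pow, abs_neg, abs_one, one_pow, one_mul, Nat.abs_cast]
      have hlt : ∑ i ∈ Finset.range k, (k.choose (i+1) : ℝ) *
          |u (x + ((i:ℝ)+1) • h, t)| < ∑ i ∈ Finset.range k, (k.choose (i+1) : ℝ) * A := by
        refine Finset.sum_lt_sum_of_nonempty ⟨0, Finset.mem_range.mpr hk1⟩ ?_
        intro i hi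
        have hpos : 0 < (k.choose (i+1) : ℝ) := by
          exact_mod_cast Nat.choose_pos (Nat.succ_le_of_lt (Finset.mem_range.mp hi))
        exact mul_lt_mul_of_pos_left (hc i hi) hpos
      have hsumnat : ∑ i ∈ Finset.range k, k.choose (i+1) ≤ 2 ^ k := by
        have h9 := Nat.sum_range_choose k
        rw [Finset.sum_range_succ'] at h9
        calc ∑ i ∈ Finset.range k, k.choose (i+1)
            ≤ ∑ i ∈ Finset.range k, k.choose (i+1) + k.choose 0 := Nat.le_add_right _ _
          _ = 2 ^ k := h9
      have hsum : ∑ i ∈ Finset.range k, (k.choose (i+1) : ℝ) * A ≤ 2 ^ k * A := by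
        rw [← Finset.sum_mul]
        apply mul_le_mul_of_nonneg_right ?_ hApos.le
        exact_mod_cast hsumnat
      have hcontr : |u (x, t)| < |u (x, t)| := by
        calc |u (x, t)| ≤ S * ε ^ l + |T| := habs1
          _ < S * ε ^ l + 2 ^ k * A := by linarith
          _ = |u (x, t)| := by rw [h2kA]; ring
      exact absurd hcontr (lt_irrefl _)
  -- measure-theoretic part
  set f : EuclideanSpace ℝ (Fin N) → ℝ≥0∞ := fun y => ENNReal.ofReal (|u (y, t)| ^ p)
    with hfdef
  have hfcont : Continuous f := by
    have h1 : Continuous fun y : EuclideanSpace ℝ (Fin N) => u (y, t) :=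
      hu.comp (continuous_id.prodMk continuous_const)
    exact ENNReal.continuous_ofReal.comp (h1.abs.rpow_const fun y => Or.inr hp0.le)
  set Bad : Set (EuclideanSpace ℝ (Fin N)) := {y | ENNReal.ofReal (A ^ p) ≤ f y} with hBdef
  have hsub : Metric.ball (0 : EuclideanSpace ℝ (Fin N)) ε ⊆
      ⋃ i ∈ Finset.range k, (fun h => x + ((i:ℝ)+1) • h) ⁻¹' Bad := by
    intro h hh
    rw [mem_ball_zero_iff] at hh
    obtain ⟨i, hi, hAi⟩ := hcover h hh.le
    refine Set.mem_iUnion₂.mpr ⟨i, hi, ?_⟩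
    show ENNReal.ofReal (A ^ p) ≤ f (x + ((i:ℝ)+1) • h)
    exact ENNReal.ofReal_le_ofReal (Real.rpow_le_rpow hApos.le hAi hp0.le)
  have hpre : ∀ i : ℕ, volume ((fun h : EuclideanSpace ℝ (Fin N) =>
      x + ((i:ℝ)+1) • h) ⁻¹' Bad) ≤ volume Bad := by
    intro i
    have hcne : ((i:ℝ)+1) ≠ 0 := by positivity
    have e1 : (fun h : EuclideanSpace ℝ (Fin N) => x + ((i:ℝ)+1) • h) ⁻¹' Bad
        = (((i:ℝ)+1) • ·) ⁻¹' ((x + ·) ⁻¹' Bad) := rfl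
    rw [e1, Measure.addHaar_preimage_smul volume hcne, measure_preimage_add]
    have hle1 : ENNReal.ofReal |(((i:ℝ)+1) ^
        Module.finrank ℝ (EuclideanSpace ℝ (Fin N)))⁻¹| ≤ 1 := by
      apply ENNReal.ofReal_le_one.mpr
      rw [abs_of_nonneg (by positivity)]
      have h7 : (1:ℝ) ≤ ((i:ℝ)+1) ^ Module.finrank ℝ (EuclideanSpace ℝ (Fin N)) := by
        calc (1:ℝ) = 1 ^ Module.finrank ℝ (EuclideanSpace ℝ (Fin N)) := (one_pow _).symm
          _ ≤ _ := pow_le_pow_left₀ zero_le_one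
              (by linarith [Nat.cast_nonneg (α := ℝ) i]) _
      exact inv_le_one_of_one_le₀ h7
    calc ENNReal.ofReal |(((i:ℝ)+1) ^ Module.finrank ℝ (EuclideanSpace ℝ (Fin N)))⁻¹|
        * volume Bad ≤ 1 * volume Bad := mul_le_mul_left hle1 _
      _ = volume Bad := one_mul _
  have hmeas1 : volume (Metric.ball (0 : EuclideanSpace ℝ (Fin N)) ε) ≤
      (k : ℝ≥0∞) * volume Bad := by
    calc volume (Metric.ball (0 : EuclideanSpace ℝ (Fin N)) ε)
        ≤ volume (⋃ i ∈ Finset.range k, (fun h => x + ((i:ℝ)+1) • h) ⁻¹' Bad) :=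
          measure_mono hsub
      _ ≤ ∑ i ∈ Finset.range k, volume ((fun h => x + ((i:ℝ)+1) • h) ⁻¹' Bad) :=
          measure_biUnion_finset_le _ _
      _ ≤ ∑ _i ∈ Finset.range k, volume Bad := Finset.sum_le_sum fun i _ => hpre i
      _ = (k : ℝ≥0∞) * volume Bad := by
          rw [Finset.sum_const, Finset.card_range, nsmul_eq_mul]
  have hcheb : ENNReal.ofReal (A ^ p) * volume Bad ≤ ∫⁻ y, f y :=
    mul_meas_ge_le_lintegral₀ hfcont.aemeasurable _
  have hMp : (∫⁻ y, f y) ≤ (mpP u p) ^ p := by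
    have h1 : (∫⁻ y, f y) ^ ((1:ℝ)/p) ≤ mpP u p :=
      le_iSup_of_le t (le_iSup_of_le ht le_rfl)
    calc (∫⁻ y, f y) = ((∫⁻ y, f y) ^ ((1:ℝ)/p)) ^ p := by
          rw [← ENNReal.rpow_mul, one_div_mul_cancel hp0.ne', ENNReal.rpow_one]
      _ ≤ (mpP u p) ^ p := ENNReal.rpow_le_rpow h1 hp0.le
  have hkey : ENNReal.ofReal (A ^ p) * volume (Metric.ball (0 : EuclideanSpace ℝ (Fin N)) ε)
      ≤ (k : ℝ≥0∞) * (mpP u p) ^ p := by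
    calc ENNReal.ofReal (A ^ p) * volume (Metric.ball (0 : EuclideanSpace ℝ (Fin N)) ε)
        ≤ ENNReal.ofReal (A ^ p) * ((k : ℝ≥0∞) * volume Bad) := mul_le_mul_right hmeas1 _
      _ = (k : ℝ≥0∞) * (ENNReal.ofReal (A ^ p) * volume Bad) := by ring
      _ ≤ (k : ℝ≥0∞) * ∫⁻ y, f y := mul_le_mul_right hcheb _
      _ ≤ (k : ℝ≥0∞) * (mpP u p) ^ p := mul_le_mul_right hMp _
  have hballvol : volume (Metric.ball (0 : EuclideanSpace ℝ (Fin N)) ε)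
      = ENNReal.ofReal (ε ^ N) * volume (Metric.ball (0 : EuclideanSpace ℝ (Fin N)) 1) := by
    rw [Measure.addHaar_ball_of_pos volume _ hε, finrank_euclideanSpace_fin]
  have hfin2 : (k : ℝ≥0∞) * (mpP u p) ^ p ≠ ⊤ :=
    ENNReal.mul_ne_top (by simp) (ENNReal.rpow_ne_top_of_nonneg hp0.le hMfin.ne)
  have hreal : A ^ p * (ε ^ N * c0) ≤ (k : ℝ) * M ^ p := by
    have h1 := ENNReal.toReal_mono hfin2 hkey
    rw [hballvol, ENNReal.toReal_mul, ENNReal.toReal_mul, ENNReal.toReal_mul,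
      ENNReal.toReal_ofReal (Real.rpow_nonneg hApos.le p),
      ENNReal.toReal_ofReal (by positivity), ENNReal.toReal_natCast,
      ← ENNReal.toReal_rpow] at h1
    exact h1
  -- convert to rpow and finish the algebra
  rw [← Real.rpow_natCast ε N] at hreal
  have hεN : (0:ℝ) < ε ^ (N:ℝ) := Real.rpow_pos_of_pos hε _
  have hA2 : A ^ p ≤ (k:ℝ)/c0 * ε ^ (-(N:ℝ)) * M ^ p := by
    have h2 : A ^ p ≤ (k:ℝ) * M ^ p / (ε ^ (N:ℝ) * c0) :=
      (le_div_iff₀ (by positivity)).mpr (by linarith)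
    calc A ^ p ≤ (k:ℝ) * M ^ p / (ε ^ (N:ℝ) * c0) := h2
      _ = (k:ℝ)/c0 * ε ^ (-(N:ℝ)) * M ^ p := by
        rw [Real.rpow_neg hε.le]
        field_simp
  have hAB : A ≤ ((k:ℝ)/c0) ^ ((1:ℝ)/p) * ε ^ (-(N:ℝ)/p) * M := by
    have e0 : (A ^ p) ^ ((1:ℝ)/p) = A := by
      rw [← Real.rpow_mul hApos.le, mul_one_div_cancel hp0.ne', Real.rpow_one]
    have e1 : ((k:ℝ)/c0 * ε ^ (-(N:ℝ)) * M ^ p) ^ ((1:ℝ)/p)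
        = ((k:ℝ)/c0) ^ ((1:ℝ)/p) * ε ^ (-(N:ℝ)/p) * M := by
      rw [Real.mul_rpow (by positivity) (Real.rpow_nonneg hM0 p),
        Real.mul_rpow (by positivity) (Real.rpow_pos_of_pos hε _).le,
        ← Real.rpow_mul hε.le, ← Real.rpow_mul hM0,
        mul_one_div_cancel hp0.ne', Real.rpow_one, mul_one_div]
    calc A = (A ^ p) ^ ((1:ℝ)/p) := e0.symm
      _ ≤ ((k:ℝ)/c0 * ε ^ (-(N:ℝ)) * M ^ p) ^ ((1:ℝ)/p) :=
          Real.rpow_le_rpow (Real.rpow_nonneg hApos.le p) hA2 (by positivity)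
      _ = ((k:ℝ)/c0) ^ ((1:ℝ)/p) * ε ^ (-(N:ℝ)/p) * M := e1
  -- final assembly
  have hfinal1 : S * ε ^ l ≤ C * ε ^ l * S := by
    nlinarith [mul_nonneg (sub_nonneg.mpr hC1) (mul_nonneg hεl.le hS0)]
  have hCge : (2:ℝ) ^ k * ((k:ℝ)/c0) ^ ((1:ℝ)/p) ≤ C := by
    rw [hCdef]; linarith
  have hfinal2 : (2:ℝ) ^ k * A ≤ C * ε ^ (-(N:ℝ)/p) * M := by
    calc (2:ℝ) ^ k * A ≤ 2 ^ k * (((k:ℝ)/c0) ^ ((1:ℝ)/p) * ε ^ (-(N:ℝ)/p) * M) :=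
          mul_le_mul_of_nonneg_left hAB (by positivity)
      _ = (2 ^ k * ((k:ℝ)/c0) ^ ((1:ℝ)/p)) * (ε ^ (-(N:ℝ)/p) * M) := by ring
      _ ≤ C * (ε ^ (-(N:ℝ)/p) * M) :=
          mul_le_mul_of_nonneg_right hCge (mul_nonneg hεNp.le hM0)
      _ = C * ε ^ (-(N:ℝ)/p) * M := by ring
  calc |u (x, t)| = S * ε ^ l + 2 ^ k * A := by rw [h2kA]; ring
    _ ≤ C * ε ^ l * S + C * ε ^ (-(N:ℝ)/p) * M := add_le_add hfinal1 hfinal2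
end

section
/- (Integrated pointwise estimate (2.7).) Let l > 0 be noninteger and k = ⌈l⌉. There is a constant C = C(N, l, p, k) > 0 such that for every bounded continuous function u : ℝ^N × ℝ → ℝ with ⟨u⟩^{(l)} < ∞, every x ∈ ℝ^N, every t ≥ 0 and every ε > 0, one has ε^{N+2} |u(x,t)|^p ≤ C (⟨u⟩^{(l)})^p ε^{N+2+pl} + C Σ_{i=1}^{k} ∫_{Q_{iε}(x,t)} |u(z,θ)|^p dz dθ, where Q_r(x,t) := { (z,θ) ∈ ℝ^N × ℝ : |z - x| ≤ r, t ≤ θ ≤ t + r ε } with r = iε (i.e. Q_{iε}(x,t) = { |z-x| ≤ iε, t ≤ θ ≤ t + iε² }). -/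
open MeasureTheory Finset ENNReal

/-! For an increment `H = (h, τ)` with `‖h‖ ≤ ε` and `0 < τ ≤ ε ^ 2`, solving the definition of
`Δ_H^k u(x,t)` for its `i = 0` term gives
`|u(x,t)| ≤ |Δ_H^k u(x,t)| + ∑_{i=1}^k C(k,i) |u((x,t) + iH)|`, and the seminorm bounds
`|Δ_H^k u(x,t)|` by `⟨u⟩^{(l)} (2ε)^l`. Raising this to the `p`-th power and integrating over all
such `H`, a set of measure `ε^{N+2} |B_1|`, turns each `|u((x,t) + iH)|^p` into an integral over
the image of that set under `H ↦ (x,t) + iH`; the image lies in `Q_{iε}(x,t)` and the dilation has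
Jacobian `i^{N+1} ≥ 1`. -/

theorem ENNReal.add_sum_rpow_le {ι : Type*} (s : Finset ι) (a : ℝ≥0∞) (b : ι → ℝ≥0∞) {p : ℝ}
    (hp : 1 ≤ p) :
    (a + ∑ i ∈ s, b i) ^ p ≤ ((#s : ℝ≥0∞) + 1) ^ (p - 1) * (a ^ p + ∑ i ∈ s, b i ^ p) := by
  have key := ENNReal.rpow_sum_le_const_mul_sum_rpow (s := s.insertNone)
    (f := fun i => i.elim a b) hp
  simpa [Finset.sum_insertNone, Finset.card_insertNone] using key

theorem setLIntegral_comp_add_smul_le {E : Type*} [NormedAddCommGroup E] [NormedSpace ℝ E]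
    [MeasurableSpace E] [BorelSpace E] [FiniteDimensional ℝ E] (μ : Measure E)
    [μ.IsAddHaarMeasure] (f : E → ℝ≥0∞) (a : E) {c : ℝ} (hc : 1 ≤ c) {s T : Set E}
    (hsT : Set.MapsTo (fun z => a + c • z) s T) :
    ∫⁻ z in s, f (a + c • z) ∂μ ≤ ∫⁻ z in T, f z ∂μ := by
  have hc0 : c ≠ 0 := (zero_lt_one.trans_le hc).ne'
  let φ : E ≃ₜ E := (Homeomorph.smulOfNeZero c hc0).trans (Homeomorph.addLeft a)
  have hmap : μ.map φ = ENNReal.ofReal |(c ^ Module.finrank ℝ E)⁻¹| • μ := by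
    have : (φ : E → E) = (a + ·) ∘ (c • ·) := rfl
    rw [this, ← Measure.map_map (measurable_const_add a) (measurable_const_smul c),
      Measure.map_addHaar_smul μ hc0, Measure.map_smul, map_add_left_eq_self]
  have hjac : ENNReal.ofReal |(c ^ Module.finrank ℝ E)⁻¹| ≤ 1 := by
    rw [ENNReal.ofReal_le_one, abs_inv, abs_of_pos (by positivity)]
    exact inv_le_one_of_one_le₀ (one_le_pow₀ hc)
  calc ∫⁻ z in s, f (a + c • z) ∂μ ≤ ∫⁻ z in φ ⁻¹' T, f (φ z) ∂μ :=
        lintegral_mono_set hsT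
    _ = ∫⁻ z in T, f z ∂μ.map φ := by
        rw [φ.measurableEmbedding.restrict_map, φ.measurableEmbedding.lintegral_map]
    _ ≤ ∫⁻ z in T, f z ∂μ := by
        rw [hmap, Measure.restrict_smul, lintegral_smul_measure, smul_eq_mul]
        exact mul_le_of_le_one_left zero_le hjac

theorem ofReal_rpow_mul_mul_ofReal_rpow_rpow {a l p ε : ℝ} {s : ℝ≥0∞} (hε : 0 < ε) (hp : 0 ≤ p)
    (hs : s ≠ ⊤) :
    ENNReal.ofReal (ε ^ a) * (s * ENNReal.ofReal ((2 * ε) ^ l)) ^ p =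
      ENNReal.ofReal (2 ^ (p * l) * s.toReal ^ p * ε ^ (a + p * l)) := by
  rw [← ENNReal.ofReal_toReal hs, ← ENNReal.ofReal_mul ENNReal.toReal_nonneg,
    ENNReal.ofReal_rpow_of_nonneg (by positivity) hp, ← ENNReal.ofReal_mul (by positivity),
    ENNReal.toReal_ofReal ENNReal.toReal_nonneg, Real.mul_rpow (by positivity) (by positivity),
    ← Real.rpow_mul (by positivity), Real.mul_rpow zero_le_two hε.le, Real.rpow_add hε a,
    mul_comm l p]
  ring_nf

section Parabolic

variable {N : ℕ}

theorem pnormH_le_two_mul {h : EuclideanSpace ℝ (Fin N)} {τ ε : ℝ} (hh : ‖h‖ ≤ ε) (hτ₀ : 0 ≤ τ)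
    (hτ : τ ≤ ε ^ 2) : pnormH h τ ≤ 2 * ε := by
  have hε : 0 ≤ ε := (norm_nonneg h).trans hh
  have hsqrt : |τ| ^ ((1 : ℝ) / 2) ≤ ε := by
    rw [abs_of_nonneg hτ₀, ← Real.sqrt_eq_rpow, ← Real.sqrt_sq hε]
    exact Real.sqrt_le_sqrt hτ
  unfold pnormH
  linarith

theorem enorm_fdiffP_le (u : EuclideanSpace ℝ (Fin N) × ℝ → ℝ) (l : ℝ) (k : ℕ)
    {x h : EuclideanSpace ℝ (Fin N)} {t τ : ℝ} (ht : 0 ≤ t) (hτ : 0 ≤ τ)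
    (hH : ¬(h = 0 ∧ τ = 0)) :
    ‖fdiffP u k h τ x t‖ₑ ≤ semiP u l k * ENNReal.ofReal (pnormH h τ ^ l) := by
  have hpow : 0 < pnormH h τ ^ l := Real.rpow_pos_of_pos (pnormH_pos hH) l
  have hquot : ENNReal.ofReal (|fdiffP u k h τ x t| / pnormH h τ ^ l) ≤ semiP u l k :=
    le_iSup_of_le x <| le_iSup_of_le t <| le_iSup_of_le ht <| le_iSup_of_le h <|
      le_iSup_of_le τ <| le_iSup_of_le hτ <| le_iSup_of_le hH le_rfl
  calc ‖fdiffP u k h τ x t‖ₑ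
      = ENNReal.ofReal (|fdiffP u k h τ x t| / pnormH h τ ^ l) *
          ENNReal.ofReal (pnormH h τ ^ l) := by
        rw [Real.enorm_eq_ofReal_abs, ← ENNReal.ofReal_mul (by positivity),
          div_mul_cancel₀ _ hpow.ne']
    _ ≤ semiP u l k * ENNReal.ofReal (pnormH h τ ^ l) := by gcongr

theorem enorm_le_enorm_fdiffP_add_sum (u : EuclideanSpace ℝ (Fin N) × ℝ → ℝ) (k : ℕ)
    (h : EuclideanSpace ℝ (Fin N)) (τ : ℝ) (x : EuclideanSpace ℝ (Fin N)) (t : ℝ) :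
    ‖u (x, t)‖ₑ ≤ ‖fdiffP u k h τ x t‖ₑ +
      ∑ i ∈ Icc 1 k, (k.choose i : ℝ≥0∞) * ‖u (x + (i : ℝ) • h, t + i * τ)‖ₑ := by
  set f : ℕ → ℝ := fun i => (-1) ^ (k - i) * (k.choose i : ℝ) * u (x + (i : ℝ) • h, t + i * τ)
  have hsplit : fdiffP u k h τ x t = f 0 + ∑ i ∈ Icc 1 k, f i := by
    rw [← Finset.Ico_add_one_right_eq_Icc, fdiffP, Finset.range_eq_Ico]
    exact Finset.sum_eq_sum_Ico_succ_bot (Nat.succ_pos k) f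
  have hf0 : ‖u (x, t)‖ₑ = ‖f 0‖ₑ := by simp [f, enorm_mul, enorm_pow]
  calc ‖u (x, t)‖ₑ = ‖fdiffP u k h τ x t - ∑ i ∈ Icc 1 k, f i‖ₑ := by
        rw [hf0, hsplit, add_sub_cancel_right]
    _ ≤ ‖fdiffP u k h τ x t‖ₑ + ∑ i ∈ Icc 1 k, ‖f i‖ₑ :=
        enorm_sub_le.trans (by gcongr; exact enorm_sum_le _ _)
    _ = _ := by simp [f, enorm_mul, enorm_pow]

/-- The cylinder `Q_r(x, t)`, of time height `r ^ 2`. -/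
def parabolicCylinder (x : EuclideanSpace ℝ (Fin N)) (t r : ℝ) :
    Set (EuclideanSpace ℝ (Fin N) × ℝ) :=
  {z | ‖z.1 - x‖ ≤ r ∧ t ≤ z.2 ∧ z.2 ≤ t + r ^ 2}

/-- `(k + 1) ^ (p - 1)` is the power-mean constant for the `k + 1` terms of `Δ_H^k u(x,t)`, and
`2 ^ k` bounds the binomial coefficients. -/
noncomputable def differenceConst (k : ℕ) (p : ℝ) : ℝ≥0∞ :=
  ((k : ℝ≥0∞) + 1) ^ (p - 1) * (2 ^ k : ℝ≥0∞) ^ p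

theorem differenceConst_ne_top (k : ℕ) {p : ℝ} (hp : 1 ≤ p) : differenceConst k p ≠ ⊤ := by
  unfold differenceConst
  apply ENNReal.mul_ne_top <;> apply ENNReal.rpow_ne_top_of_nonneg (by linarith) <;> simp

theorem differenceConst_ne_zero (k : ℕ) (p : ℝ) : differenceConst k p ≠ 0 := by
  unfold differenceConst
  positivity

theorem enorm_rpow_le_of_increment (u : EuclideanSpace ℝ (Fin N) × ℝ → ℝ) {l : ℝ} (hl : 0 ≤ l)
    (k : ℕ) {p : ℝ} (hp : 1 ≤ p) {x h : EuclideanSpace ℝ (Fin N)} {t τ ε : ℝ} (ht : 0 ≤ t)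
    (hh : ‖h‖ ≤ ε) (hτ₀ : 0 < τ) (hτ : τ ≤ ε ^ 2) :
    ‖u (x, t)‖ₑ ^ p ≤ differenceConst k p * ((semiP u l k * ENNReal.ofReal ((2 * ε) ^ l)) ^ p +
      ∑ i ∈ Icc 1 k, ‖u (x + (i : ℝ) • h, t + i * τ)‖ₑ ^ p) := by
  set A := semiP u l k * ENNReal.ofReal ((2 * ε) ^ l)
  have hdiff : ‖fdiffP u k h τ x t‖ₑ ≤ A := by
    refine (enorm_fdiffP_le u l k ht hτ₀.le fun hH => hτ₀.ne' hH.2).trans ?_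
    have := pnormH_le_two_mul hh hτ₀.le hτ
    show _ ≤ semiP u l k * ENNReal.ofReal ((2 * ε) ^ l)
    gcongr
    exact (pnormH_pos fun hH => hτ₀.ne' hH.2).le
  have hsum : ‖u (x, t)‖ₑ ≤ A + ∑ i ∈ Icc 1 k, 2 ^ k * ‖u (x + (i : ℝ) • h, t + i * τ)‖ₑ := by
    refine (enorm_le_enorm_fdiffP_add_sum u k h τ x t).trans ?_
    gcongr with i
    exact_mod_cast Nat.choose_le_two_pow k i
  have hone : 1 ≤ (2 ^ k : ℝ≥0∞) ^ p :=
    ENNReal.one_le_rpow (one_le_pow₀ one_le_two) (by linarith)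
  calc ‖u (x, t)‖ₑ ^ p
      ≤ (A + ∑ i ∈ Icc 1 k, 2 ^ k * ‖u (x + (i : ℝ) • h, t + i * τ)‖ₑ) ^ p :=
        ENNReal.rpow_le_rpow hsum (by linarith)
    _ ≤ ((k : ℝ≥0∞) + 1) ^ (p - 1) * (A ^ p +
          (2 ^ k : ℝ≥0∞) ^ p * ∑ i ∈ Icc 1 k, ‖u (x + (i : ℝ) • h, t + i * τ)‖ₑ ^ p) := by
        simpa [ENNReal.mul_rpow_of_nonneg _ _ (zero_le_one.trans hp), Finset.mul_sum] using
          ENNReal.add_sum_rpow_le (Icc 1 k) A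
            (fun i => 2 ^ k * ‖u (x + (i : ℝ) • h, t + i * τ)‖ₑ) hp
    _ ≤ _ := by
        rw [differenceConst, mul_assoc, mul_add ((2 ^ k : ℝ≥0∞) ^ p)]
        gcongr
        exact le_mul_of_one_le_left zero_le hone

theorem volume_closedBall_prod_Ioc {ε : ℝ} (hε : 0 ≤ ε) :
    volume (Metric.closedBall (0 : EuclideanSpace ℝ (Fin N)) ε ×ˢ Set.Ioc 0 (ε ^ 2)) =
      ENNReal.ofReal (ε ^ ((N : ℝ) + 2)) *
        volume (Metric.ball (0 : EuclideanSpace ℝ (Fin N)) 1) := by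
  rw [Measure.volume_eq_prod, Measure.prod_prod, Real.volume_Ioc,
    Measure.addHaar_closedBall _ _ hε, finrank_euclideanSpace_fin, sub_zero, mul_right_comm,
    ← ENNReal.ofReal_mul (by positivity), Real.rpow_add_of_nonneg hε (by positivity) zero_le_two,
    Real.rpow_natCast, Real.rpow_two]

theorem volume_mul_enorm_rpow_le (u : EuclideanSpace ℝ (Fin N) × ℝ → ℝ) (hu : Measurable u)
    {l : ℝ} (hl : 0 ≤ l) (k : ℕ) {p : ℝ} (hp : 1 ≤ p) (x : EuclideanSpace ℝ (Fin N)) {t : ℝ}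
    (ht : 0 ≤ t) (ε : ℝ) :
    volume (Metric.closedBall (0 : EuclideanSpace ℝ (Fin N)) ε ×ˢ Set.Ioc 0 (ε ^ 2)) *
        ‖u (x, t)‖ₑ ^ p ≤
      differenceConst k p *
        (volume (Metric.closedBall (0 : EuclideanSpace ℝ (Fin N)) ε ×ˢ Set.Ioc 0 (ε ^ 2)) *
            (semiP u l k * ENNReal.ofReal ((2 * ε) ^ l)) ^ p +
          ∑ i ∈ Icc 1 k, ∫⁻ z in parabolicCylinder x t (i * ε), ‖u z‖ₑ ^ p) := by
  set R := Metric.closedBall (0 : EuclideanSpace ℝ (Fin N)) ε ×ˢ Set.Ioc 0 (ε ^ 2)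
  have hmeas : ∀ i : ℕ, Measurable fun z : EuclideanSpace ℝ (Fin N) × ℝ =>
      ‖u ((x, t) + (i : ℝ) • z)‖ₑ ^ p := fun i => by fun_prop
  have hcyl : ∀ i ∈ Icc 1 k, ∫⁻ z in R, ‖u ((x, t) + (i : ℝ) • z)‖ₑ ^ p ≤
      ∫⁻ z in parabolicCylinder x t (i * ε), ‖u z‖ₑ ^ p := by
    intro i hi
    have : (volume : Measure (EuclideanSpace ℝ (Fin N) × ℝ)).IsAddHaarMeasure :=
      Measure.prod.instIsAddHaarMeasure _ _
    have hi1 : (1 : ℝ) ≤ i := by exact_mod_cast (Finset.mem_Icc.mp hi).1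
    refine setLIntegral_comp_add_smul_le volume (fun z => ‖u z‖ₑ ^ p) (x, t) hi1 ?_
    rintro ⟨h, τ⟩ ⟨hh, hτ₀, hτ⟩
    rw [Metric.mem_closedBall, dist_zero_right] at hh
    dsimp only at hh hτ₀ hτ
    have hi0 : (0 : ℝ) ≤ i := zero_le_one.trans hi1
    refine ⟨?_, ?_, ?_⟩
    · simpa [norm_smul, abs_of_nonneg hi0] using mul_le_mul_of_nonneg_left hh hi0
    · simp only [Prod.snd_add, Prod.smul_snd, smul_eq_mul]
      nlinarith
    · have hsq : (i : ℝ) * ε ^ 2 ≤ (i * ε) ^ 2 := by nlinarith [sq_nonneg ε]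
      simp only [Prod.snd_add, Prod.smul_snd, smul_eq_mul]
      nlinarith
  calc volume R * ‖u (x, t)‖ₑ ^ p = ∫⁻ _ in R, ‖u (x, t)‖ₑ ^ p := by
        rw [setLIntegral_const, mul_comm]
    _ ≤ ∫⁻ z in R, differenceConst k p * ((semiP u l k * ENNReal.ofReal ((2 * ε) ^ l)) ^ p +
          ∑ i ∈ Icc 1 k, ‖u ((x, t) + (i : ℝ) • z)‖ₑ ^ p) := by
        refine setLIntegral_mono (by fun_prop) fun z hz => ?_
        rw [Set.mem_prod, Metric.mem_closedBall, dist_zero_right] at hz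
        exact enorm_rpow_le_of_increment u hl k hp ht hz.1 hz.2.1 hz.2.2
    _ = differenceConst k p * (volume R * (semiP u l k * ENNReal.ofReal ((2 * ε) ^ l)) ^ p +
          ∑ i ∈ Icc 1 k, ∫⁻ z in R, ‖u ((x, t) + (i : ℝ) • z)‖ₑ ^ p) := by
        rw [lintegral_const_mul _ (by fun_prop), lintegral_add_left measurable_const,
          setLIntegral_const, mul_comm _ (volume R), lintegral_finsetSum _ fun i _ => hmeas i]
    _ ≤ _ := by
        gcongr _ * (_ + ?_)
        exact Finset.sum_le_sum hcyl

theorem ofReal_mul_enorm_rpow_le (u : EuclideanSpace ℝ (Fin N) × ℝ → ℝ) (hu : Measurable u)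
    {l : ℝ} (hl : 0 ≤ l) (k : ℕ) {p : ℝ} (hp : 1 ≤ p) (x : EuclideanSpace ℝ (Fin N)) {t : ℝ}
    (ht : 0 ≤ t) {ε : ℝ} (hε : 0 ≤ ε) :
    ENNReal.ofReal (ε ^ ((N : ℝ) + 2)) * ‖u (x, t)‖ₑ ^ p ≤
      differenceConst k p * (ENNReal.ofReal (ε ^ ((N : ℝ) + 2)) *
          (semiP u l k * ENNReal.ofReal ((2 * ε) ^ l)) ^ p) +
        differenceConst k p * (volume (Metric.ball (0 : EuclideanSpace ℝ (Fin N)) 1))⁻¹ *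
          ∑ i ∈ Icc 1 k, ∫⁻ z in parabolicCylinder x t (i * ε), ‖u z‖ₑ ^ p := by
  set v := volume (Metric.ball (0 : EuclideanSpace ℝ (Fin N)) 1)
  have hv₀ : v ≠ 0 := (Metric.measure_ball_pos _ _ one_pos).ne'
  have hv : v * v⁻¹ = 1 := ENNReal.mul_inv_cancel hv₀ measure_ball_lt_top.ne
  have key := volume_mul_enorm_rpow_le u hu hl k hp x ht ε
  rw [volume_closedBall_prod_Ioc hε] at key
  rw [← ENNReal.mul_le_mul_iff_right hv₀ measure_ball_lt_top.ne]
  calc v * (ENNReal.ofReal (ε ^ ((N : ℝ) + 2)) * ‖u (x, t)‖ₑ ^ p)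
      = ENNReal.ofReal (ε ^ ((N : ℝ) + 2)) * v * ‖u (x, t)‖ₑ ^ p := by ring
    _ ≤ _ := key
    _ = _ := by
        rw [mul_add, mul_add]
        congr 1
        · ring
        · rw [show ∀ a b : ℝ≥0∞, v * (a * v⁻¹ * b) = a * b * (v * v⁻¹) from fun a b => by ring,
            hv, mul_one]

end Parabolic

theorem integrated_pointwise_estimate_general (N : ℕ) (p : ℝ) (hp : 1 < p)
    (l : ℝ) (hl : 0 < l) :
    ∃ C : ℝ, 0 < C ∧
      ∀ u : EuclideanSpace ℝ (Fin N) × ℝ → ℝ, Continuous u →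
        Bornology.IsBounded (Set.range u) →
        semiP u l ⌈l⌉₊ < ⊤ →
        ∀ (x : EuclideanSpace ℝ (Fin N)) (t : ℝ), 0 ≤ t →
          ∀ ε : ℝ, 0 < ε →
            ENNReal.ofReal (ε ^ ((N : ℝ) + 2) * |u (x, t)| ^ p) ≤
              ENNReal.ofReal
                (C * (semiP u l ⌈l⌉₊).toReal ^ p * ε ^ ((N : ℝ) + 2 + p * l)) +
              ENNReal.ofReal C *
                ∑ i ∈ Finset.Icc 1 ⌈l⌉₊,
                  ∫⁻ z in {z : EuclideanSpace ℝ (Fin N) × ℝ |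
                      ‖z.1 - x‖ ≤ (i : ℝ) * ε ∧ t ≤ z.2 ∧ z.2 ≤ t + ((i : ℝ) * ε) ^ 2},
                    ENNReal.ofReal (|u z| ^ p) := by
  have hp₀ : 0 ≤ p := by linarith
  set K := differenceConst ⌈l⌉₊ p
  set v := volume (Metric.ball (0 : EuclideanSpace ℝ (Fin N)) 1)
  have hK : 0 < K.toReal :=
    ENNReal.toReal_pos (differenceConst_ne_zero _ _) (differenceConst_ne_top _ hp.le)
  have hv : v⁻¹ = ENNReal.ofReal v.toReal⁻¹ := by
    rw [← ENNReal.toReal_inv, ENNReal.ofReal_toReal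
      (ENNReal.inv_ne_top.mpr (Metric.measure_ball_pos _ _ one_pos).ne')]
  refine ⟨K.toReal * (2 ^ (p * l) + v.toReal⁻¹), by positivity, ?_⟩
  intro u hu _ hfin x t ht ε hε
  have key := ofReal_mul_enorm_rpow_le u hu.measurable hl.le ⌈l⌉₊ hp.le x ht hε.le
  rw [ofReal_rpow_mul_mul_ofReal_rpow_rpow hε hp₀ hfin.ne, hv,
    ← ENNReal.ofReal_toReal (differenceConst_ne_top _ hp.le), ← ENNReal.ofReal_mul hK.le,
    ← ENNReal.ofReal_mul hK.le] at key
  simp only [Real.enorm_eq_ofReal_abs, ENNReal.ofReal_rpow_of_nonneg (abs_nonneg _) hp₀,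
    ← ENNReal.ofReal_mul (by positivity : 0 ≤ ε ^ ((N : ℝ) + 2))] at key
  have hS : 0 ≤ (semiP u l ⌈l⌉₊).toReal ^ p * ε ^ ((N : ℝ) + 2 + p * l) := by positivity
  have hv₀ : 0 ≤ v.toReal⁻¹ := by positivity
  refine key.trans (add_le_add (ENNReal.ofReal_le_ofReal ?_)
    (mul_le_mul_left (ENNReal.ofReal_le_ofReal ?_) _))
  · nlinarith [mul_nonneg (mul_nonneg hK.le hv₀) hS]
  · nlinarith [mul_nonneg hK.le (Real.rpow_nonneg zero_le_two (p * l))]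

/-- Integrated pointwise estimate (2.7). -/
theorem integrated_pointwise_estimate (N : ℕ) (hN : 1 ≤ N) (p : ℝ) (hp : 1 < p)
    (l : ℝ) (hl : 0 < l) (hlni : ∀ n : ℤ, (n : ℝ) ≠ l) :
    ∃ C : ℝ, 0 < C ∧
      ∀ u : EuclideanSpace ℝ (Fin N) × ℝ → ℝ, Continuous u →
        Bornology.IsBounded (Set.range u) →
        semiP u l ⌈l⌉₊ < ⊤ →
        ∀ (x : EuclideanSpace ℝ (Fin N)) (t : ℝ), 0 ≤ t →
          ∀ ε : ℝ, 0 < ε →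
            ENNReal.ofReal (ε ^ ((N : ℝ) + 2) * |u (x, t)| ^ p) ≤
              ENNReal.ofReal
                (C * (semiP u l ⌈l⌉₊).toReal ^ p * ε ^ ((N : ℝ) + 2 + p * l)) +
              ENNReal.ofReal C *
                ∑ i ∈ Finset.Icc 1 ⌈l⌉₊,
                  ∫⁻ z in {z : EuclideanSpace ℝ (Fin N) × ℝ |
                      ‖z.1 - x‖ ≤ (i : ℝ) * ε ∧ t ≤ z.2 ∧ z.2 ≤ t + ((i : ℝ) * ε) ^ 2},
                    ENNReal.ofReal (|u z| ^ p) :=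
  integrated_pointwise_estimate_general N p hp l hl
end
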